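/- arXiv:2005.06352 — 3 statements merged into one kernel-verified Lean document; each statement's English description precedes it below -/
import Mathlib

section
/- Suppose (α_n)_{n≥0} is a sequence of complex numbers such that the series Σ_{n=0}^∞ α_n j_n(t) converges absolutely and equals 0 for all t in an interval (0,h) with h > 0, with the convergence being locally uniform. Then α_n = 0 for every n ≥ 0. -/
open Real Filter

/-- The spherical Bessel function of order `n`, defined by its power series. -/
noncomputable def sphBessel (n : ℕ) (t : ℝ) : ℝ :=
  ∑' m : ℕ, (-1 : ℝ) ^ m * t ^ (2 * m + n) /
    ((2 : ℝ) ^ m * (Nat.factorial m) * (Nat.doubleFactorial (2 * n + 2 * m + 1)))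

noncomputable def bterm (n m : ℕ) (t : ℝ) : ℝ :=
  (-1 : ℝ) ^ m * t ^ (2 * m + n) /
    ((2 : ℝ) ^ m * (Nat.factorial m) * (Nat.doubleFactorial (2 * n + 2 * m + 1)))

lemma one_le_dfac (k : ℕ) : (1 : ℝ) ≤ (Nat.doubleFactorial k : ℝ) := by
  exact_mod_cast Nat.doubleFactorial_pos k

lemma dfac_mono {a b : ℕ} (h : a ≤ b) :
    Nat.doubleFactorial (2*a+1) ≤ Nat.doubleFactorial (2*b+1) := by
  induction b with
  | zero => simp [Nat.le_zero.mp h]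
  | succ b ih =>
    rcases Nat.lt_or_ge a (b+1) with h' | h'
    · refine le_trans (ih (Nat.lt_succ_iff.mp h')) ?_
      have e : 2*(b+1)+1 = (2*b+1) + 2 := by ring
      rw [e, Nat.doubleFactorial]
      exact Nat.le_mul_of_pos_left _ (by omega)
    · have : a = b+1 := le_antisymm h h'
      simp [this]

lemma denom_pos (n m : ℕ) :
    (0:ℝ) < (2:ℝ)^m * (Nat.factorial m) * (Nat.doubleFactorial (2*n+2*m+1)) := by
  apply mul_pos
  apply mul_pos (pow_pos two_pos m)
  · exact_mod_cast m.factorial_pos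
  · exact_mod_cast Nat.doubleFactorial_pos _

lemma abs_bterm (n m : ℕ) {t : ℝ} (ht : 0 ≤ t) :
    |bterm n m t| = t ^ (2*m+n) /
      ((2:ℝ)^m * (Nat.factorial m) * (Nat.doubleFactorial (2*n+2*m+1))) := by
  rw [bterm, abs_div, abs_of_pos (denom_pos n m), abs_mul, abs_pow, abs_pow, abs_neg,
    abs_one, one_pow, one_mul, abs_of_nonneg ht]

lemma summable_abs_bterm (n : ℕ) {t : ℝ} (ht : 0 ≤ t) :
    Summable (fun m => |bterm n m t|) := by
  have h1 : Summable (fun m : ℕ => t^n * ((t^2/2)^m / (Nat.factorial m))) :=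
    (Real.summable_pow_div_factorial (t^2/2)).mul_left _
  refine Summable.of_nonneg_of_le (fun m => abs_nonneg _) (fun m => ?_) h1
  rw [abs_bterm n m ht]
  have hfac : (0:ℝ) < (Nat.factorial m : ℝ) := by exact_mod_cast m.factorial_pos
  have e1 : t ^ (2*m+n) = t^n * (t^2)^m := by rw [pow_add, pow_mul]; ring
  have e2 : t^n * ((t^2/2)^m / (Nat.factorial m)) =
      t^n * (t^2)^m / ((2:ℝ)^m * (Nat.factorial m)) := by
    rw [div_pow]; field_simp
  rw [e1, e2]
  apply div_le_div_of_nonneg_left (by positivity) (by positivity)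
  exact le_mul_of_one_le_right (by positivity) (one_le_dfac _)

lemma summable_bterm (n : ℕ) {t : ℝ} (ht : 0 ≤ t) :
    Summable (fun m => bterm n m t) :=
  (summable_abs_bterm n ht).of_abs

set_option maxHeartbeats 1000000 in
lemma sphBessel_near (n : ℕ) {t : ℝ} (h0 : 0 ≤ t) (h1 : t ≤ 1) :
    |sphBessel n t - t^n / (Nat.doubleFactorial (2*n+1) : ℝ)|
      ≤ t^(n+2) / (Nat.doubleFactorial (2*n+1) : ℝ) := by
  have hs := summable_bterm n h0
  have h00 : bterm n 0 t = t^n / (Nat.doubleFactorial (2*n+1) : ℝ) := by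
    simp [bterm]
  have hD1 : (1:ℝ) ≤ (Nat.doubleFactorial (2*n+1) : ℝ) := one_le_dfac _
  have hDpos : (0:ℝ) < (Nat.doubleFactorial (2*n+1) : ℝ) := lt_of_lt_of_le one_pos hD1
  have hrepr : sphBessel n t = ∑' m, bterm n m t := rfl
  rw [hrepr, Summable.tsum_eq_zero_add hs, h00, add_sub_cancel_left]
  have hsn : Summable (fun m => |bterm n (m+1) t|) :=
    (summable_nat_add_iff 1).2 (summable_abs_bterm n h0)
  set C : ℝ := t^(n+2) / (Nat.doubleFactorial (2*n+1) : ℝ) with hC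
  have hCnn : 0 ≤ C := by positivity
  have hgeo : Summable (fun m : ℕ => C * (1/2:ℝ)^(m+1)) := by
    refine (((summable_geometric_of_lt_one (r := (1/2:ℝ)) (by norm_num) (by norm_num)).mul_left
      (C * (1/2))).congr fun m => ?_)
    rw [pow_succ]; ring
  have hbd : ∀ m : ℕ, |bterm n (m+1) t| ≤ C * (1/2:ℝ)^(m+1) := by
    intro m
    rw [abs_bterm n (m+1) h0]
    have hnum : t ^ (2*(m+1)+n) ≤ t^(n+2) :=
      pow_le_pow_of_le_one h0 h1 (by omega)
    have hfac : (1:ℝ) ≤ (Nat.factorial (m+1) : ℝ) := by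
      exact_mod_cast (m+1).factorial_pos
    have hdd : (Nat.doubleFactorial (2*n+1) : ℝ) ≤
        (Nat.doubleFactorial (2*n+2*(m+1)+1) : ℝ) := by
      have := dfac_mono (Nat.le_add_right n (m+1))
      have e : 2*(n+(m+1))+1 = 2*n+2*(m+1)+1 := by ring
      rw [e] at this
      exact_mod_cast this
    have hden : (2:ℝ)^(m+1) * (Nat.doubleFactorial (2*n+1) : ℝ) ≤
        (2:ℝ)^(m+1) * (Nat.factorial (m+1)) * (Nat.doubleFactorial (2*n+2*(m+1)+1)) := by
      calc (2:ℝ)^(m+1) * (Nat.doubleFactorial (2*n+1) : ℝ)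
          ≤ ((2:ℝ)^(m+1) * (Nat.factorial (m+1))) * (Nat.doubleFactorial (2*n+1) : ℝ) := by
            apply mul_le_mul_of_nonneg_right _ hDpos.le
            exact le_mul_of_one_le_right (by positivity) hfac
        _ ≤ _ := by
            apply mul_le_mul_of_nonneg_left hdd (by positivity)
    have key : t ^ (2*(m+1)+n) /
        ((2:ℝ)^(m+1) * (Nat.factorial (m+1)) * (Nat.doubleFactorial (2*n+2*(m+1)+1)))
        ≤ t^(n+2) / ((2:ℝ)^(m+1) * (Nat.doubleFactorial (2*n+1) : ℝ)) :=
      div_le_div₀ (by positivity) hnum (by positivity) hden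
    refine key.trans_eq ?_
    rw [hC, div_pow, one_pow]; ring
  calc |∑' m, bterm n (m+1) t| ≤ ∑' m, |bterm n (m+1) t| := by
        have habs2 : Summable fun m => ‖bterm n (m+1) t‖ := by
          simpa [Real.norm_eq_abs] using hsn
        simpa [Real.norm_eq_abs] using norm_tsum_le_tsum_norm habs2
    _ ≤ ∑' m : ℕ, C * (1/2:ℝ)^(m+1) := Summable.tsum_le_tsum hbd hsn hgeo
    _ = C := by
        rw [tsum_mul_left]
        have : ∑' m : ℕ, (1/2:ℝ)^(m+1) = 1 := by
          have e : ∀ m : ℕ, (1/2:ℝ)^(m+1) = (1/2:ℝ)^m * (1/2) := fun m => by rw [pow_succ]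
          rw [tsum_congr e, tsum_mul_right, tsum_geometric_of_lt_one (by norm_num) (by norm_num)]
          norm_num
        rw [this, mul_one]

lemma sphBessel_le (n : ℕ) {t : ℝ} (h0 : 0 ≤ t) (h1 : t ≤ 1) :
    |sphBessel n t| ≤ 2 * t^n / (Nat.doubleFactorial (2*n+1) : ℝ) := by
  have h := abs_le.mp (sphBessel_near n h0 h1)
  have hDpos : (0:ℝ) < (Nat.doubleFactorial (2*n+1) : ℝ) :=
    lt_of_lt_of_le one_pos (one_le_dfac _)
  have ht2 : t^(n+2) ≤ t^n := pow_le_pow_of_le_one h0 h1 (by omega)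
  rw [abs_le]
  constructor
  · have := h.1
    have h3 : 0 ≤ t^n / (Nat.doubleFactorial (2*n+1) : ℝ) := by positivity
    have h4 : t^(n+2) / (Nat.doubleFactorial (2*n+1) : ℝ) ≤
        t^n / (Nat.doubleFactorial (2*n+1) : ℝ) := by gcongr
    have h5 : 2 * t^n / (Nat.doubleFactorial (2*n+1) : ℝ) =
        t^n / (Nat.doubleFactorial (2*n+1) : ℝ) + t^n / (Nat.doubleFactorial (2*n+1) : ℝ) := by
      ring
    linarith
  · have := h.2
    have h4 : t^(n+2) / (Nat.doubleFactorial (2*n+1) : ℝ) ≤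
        t^n / (Nat.doubleFactorial (2*n+1) : ℝ) := by gcongr
    have e : 2 * t^n / (Nat.doubleFactorial (2*n+1) : ℝ) =
        t^n / (Nat.doubleFactorial (2*n+1) : ℝ) + t^n / (Nat.doubleFactorial (2*n+1) : ℝ) := by
      ring
    nlinarith

lemma sphBessel_ge (n : ℕ) {t : ℝ} (h0 : 0 ≤ t) (h1 : t ≤ 1/2) :
    t^n / (2 * (Nat.doubleFactorial (2*n+1) : ℝ)) ≤ sphBessel n t := by
  have h := (abs_le.mp (sphBessel_near n h0 (by linarith))).1
  have hDpos : (0:ℝ) < (Nat.doubleFactorial (2*n+1) : ℝ) :=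
    lt_of_lt_of_le one_pos (one_le_dfac _)
  have ht2 : t^(n+2) = t^n * t^2 := by rw [pow_add]
  have htn : 0 ≤ t^n := pow_nonneg h0 n
  have hsq : t^2 ≤ 1/4 := by nlinarith
  have key : t^n / (2 * (Nat.doubleFactorial (2*n+1) : ℝ)) ≤
      t^n / (Nat.doubleFactorial (2*n+1) : ℝ) - t^(n+2) / (Nat.doubleFactorial (2*n+1) : ℝ) := by
    rw [ht2, div_sub_div_same]
    rw [div_le_div_iff₀ (by positivity) hDpos]
    nlinarith [mul_nonneg (mul_nonneg htn hDpos.le) (by nlinarith : (0:ℝ) ≤ 1 - 2*t^2)]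
  linarith

set_option maxHeartbeats 2000000 in
/-- If `Σ_{n≥0} α_n j_n(t)` converges absolutely to `0` for all `t ∈ (0,h)`, with locally
uniform convergence of the partial sums on `(0,h)`, then all the coefficients vanish. -/
theorem coeff_vanish_of_sphBessel_sum_eq_zero
    (h : ℝ) (hh : 0 < h) (α : ℕ → ℂ)
    (habs : ∀ t ∈ Set.Ioo (0 : ℝ) h, Summable fun n : ℕ => ‖α n * (sphBessel n t : ℂ)‖)
    (hzero : ∀ t ∈ Set.Ioo (0 : ℝ) h, ∑' n : ℕ, α n * (sphBessel n t : ℂ) = 0)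
    (hunif : TendstoLocallyUniformlyOn
      (fun N : ℕ => fun t : ℝ => ∑ n ∈ Finset.range N, α n * (sphBessel n t : ℂ))
      (fun t : ℝ => ∑' n : ℕ, α n * (sphBessel n t : ℂ)) atTop (Set.Ioo (0 : ℝ) h)) :
    ∀ n : ℕ, α n = 0 := by
  set t0 : ℝ := min (h/2) (1/2) with ht0def
  have ht0pos : 0 < t0 := lt_min (by linarith) (by norm_num)
  have ht0h : t0 < h := lt_of_le_of_lt (min_le_left _ _) (by linarith)
  have ht0le : t0 ≤ 1/2 := min_le_right _ _
  have ht0mem : t0 ∈ Set.Ioo (0:ℝ) h := ⟨ht0pos, ht0h⟩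
  have hnormeq : ∀ (k : ℕ) (t : ℝ), ‖α k * (sphBessel k t : ℂ)‖ = ‖α k‖ * |sphBessel k t| := by
    intro k t
    rw [norm_mul, Complex.norm_real, Real.norm_eq_abs]
  -- summability of the comparison series at t0
  have hS : Summable (fun k : ℕ => ‖α k‖ * (t0 ^ k / (Nat.doubleFactorial (2*k+1) : ℝ))) := by
    refine Summable.of_nonneg_of_le (fun k => by positivity) (fun k => ?_)
      ((habs t0 ht0mem).mul_left 2)
    have hge := sphBessel_ge k ht0pos.le ht0le
    have hjpos : 0 ≤ sphBessel k t0 := le_trans (by positivity) hge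
    rw [hnormeq k t0, abs_of_nonneg hjpos]
    have h1 : t0^k / (Nat.doubleFactorial (2*k+1) : ℝ) ≤ 2 * sphBessel k t0 := by
      have h2 : t0^k / (2 * (Nat.doubleFactorial (2*k+1) : ℝ)) ≤ sphBessel k t0 := hge
      have h3 : t0^k / (Nat.doubleFactorial (2*k+1) : ℝ) =
          2 * (t0^k / (2 * (Nat.doubleFactorial (2*k+1) : ℝ))) := by
        field_simp
      rw [h3]; linarith
    calc ‖α k‖ * (t0^k / (Nat.doubleFactorial (2*k+1) : ℝ))
        ≤ ‖α k‖ * (2 * sphBessel k t0) :=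
          mul_le_mul_of_nonneg_left h1 (norm_nonneg _)
      _ = 2 * (‖α k‖ * sphBessel k t0) := by ring
  set S : ℝ := ∑' k, ‖α k‖ * (t0 ^ k / (Nat.doubleFactorial (2*k+1) : ℝ)) with hSdef
  have hSnn : 0 ≤ S := tsum_nonneg (fun k => by positivity)
  intro n
  induction n using Nat.strong_induction_on with
  | _ n ih =>
  have hDpos : (0:ℝ) < (Nat.doubleFactorial (2*n+1) : ℝ) :=
    lt_of_lt_of_le one_pos (one_le_dfac _)
  -- the key estimate for each t ∈ (0, t0)
  have key : ∀ t, 0 < t → t < t0 →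
      ‖α n‖ * (t^n / (2 * (Nat.doubleFactorial (2*n+1) : ℝ)))
        ≤ 2 * (t/t0)^(n+1) * S := by
    intro t htp htt0
    have htmem : t ∈ Set.Ioo (0:ℝ) h := ⟨htp, htt0.trans ht0h⟩
    have ht1 : t ≤ 1/2 := le_trans htt0.le ht0le
    have hsumm : Summable (fun k => α k * (sphBessel k t : ℂ)) := (habs t htmem).of_norm
    have hsplit := Summable.sum_add_tsum_nat_add (f := fun k => α k * (sphBessel k t : ℂ)) (n+1) hsumm
    have hfin : ∑ i ∈ Finset.range (n+1), α i * (sphBessel i t : ℂ)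
        = α n * (sphBessel n t : ℂ) := by
      rw [Finset.sum_range_succ]
      have hz : ∑ i ∈ Finset.range n, α i * (sphBessel i t : ℂ) = 0 :=
        Finset.sum_eq_zero (fun i hi => by rw [ih i (Finset.mem_range.mp hi), zero_mul])
      rw [hz, zero_add]
    have heq : α n * (sphBessel n t : ℂ)
        = - ∑' k, α (k+(n+1)) * (sphBessel (k+(n+1)) t : ℂ) := by
      apply eq_neg_of_add_eq_zero_left
      rw [← hfin, hsplit]
      exact hzero t htmem
    have hnorm : Summable (fun k => ‖α (k+(n+1)) * (sphBessel (k+(n+1)) t : ℂ)‖) :=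
      (summable_nat_add_iff (n+1)).mpr (habs t htmem)
    have hshiftS : Summable (fun k : ℕ =>
        ‖α (k+(n+1))‖ * (t0 ^ (k+(n+1)) / (Nat.doubleFactorial (2*(k+(n+1))+1) : ℝ))) :=
      (summable_nat_add_iff (n+1)).mpr hS
    have hub : ‖α n‖ * |sphBessel n t|
        ≤ ∑' k, ‖α (k+(n+1)) * (sphBessel (k+(n+1)) t : ℂ)‖ := by
      calc ‖α n‖ * |sphBessel n t| = ‖α n * (sphBessel n t : ℂ)‖ := (hnormeq n t).symm
        _ = ‖∑' k, α (k+(n+1)) * (sphBessel (k+(n+1)) t : ℂ)‖ := by rw [heq, norm_neg]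
        _ ≤ _ := norm_tsum_le_tsum_norm hnorm
    have hterm : ∀ k : ℕ, ‖α (k+(n+1)) * (sphBessel (k+(n+1)) t : ℂ)‖
        ≤ 2 * (t/t0)^(n+1) * (‖α (k+(n+1))‖ *
          (t0 ^ (k+(n+1)) / (Nat.doubleFactorial (2*(k+(n+1))+1) : ℝ))) := by
      intro k
      rw [hnormeq]
      have hDk : (0:ℝ) < (Nat.doubleFactorial (2*(k+(n+1))+1) : ℝ) :=
        lt_of_lt_of_le one_pos (one_le_dfac _)
      have hle := sphBessel_le (k+(n+1)) htp.le (by linarith : t ≤ 1)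
      have hpow : t ^ (k+(n+1)) ≤ (t/t0)^(n+1) * t0 ^ (k+(n+1)) := by
        have e1 : (t/t0)^(n+1) * t0^(k+(n+1)) = t0^k * t^(n+1) := by
          rw [div_pow, pow_add]
          field_simp
          ring
        rw [pow_add, e1]
        exact mul_le_mul_of_nonneg_right (pow_le_pow_left₀ htp.le htt0.le k)
          (by positivity)
      calc ‖α (k+(n+1))‖ * |sphBessel (k+(n+1)) t|
          ≤ ‖α (k+(n+1))‖ *
            (2 * t^(k+(n+1)) / (Nat.doubleFactorial (2*(k+(n+1))+1) : ℝ)) :=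
            mul_le_mul_of_nonneg_left hle (norm_nonneg _)
        _ ≤ ‖α (k+(n+1))‖ * (2 * ((t/t0)^(n+1) * t0^(k+(n+1)))
              / (Nat.doubleFactorial (2*(k+(n+1))+1) : ℝ)) := by
            apply mul_le_mul_of_nonneg_left _ (norm_nonneg _)
            apply div_le_div_of_nonneg_right _ hDk.le
            linarith
        _ = 2 * (t/t0)^(n+1) * (‖α (k+(n+1))‖ *
              (t0 ^ (k+(n+1)) / (Nat.doubleFactorial (2*(k+(n+1))+1) : ℝ))) := by
            ring
    have hgeoS : Summable (fun k : ℕ => 2 * (t/t0)^(n+1) * (‖α (k+(n+1))‖ *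
        (t0 ^ (k+(n+1)) / (Nat.doubleFactorial (2*(k+(n+1))+1) : ℝ)))) :=
      hshiftS.mul_left _
    have htail : ∑' k, ‖α (k+(n+1)) * (sphBessel (k+(n+1)) t : ℂ)‖
        ≤ 2 * (t/t0)^(n+1) * S := by
      calc ∑' k, ‖α (k+(n+1)) * (sphBessel (k+(n+1)) t : ℂ)‖
          ≤ ∑' k, 2 * (t/t0)^(n+1) * (‖α (k+(n+1))‖ *
              (t0 ^ (k+(n+1)) / (Nat.doubleFactorial (2*(k+(n+1))+1) : ℝ))) :=
            Summable.tsum_le_tsum hterm hnorm hgeoS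
        _ = 2 * (t/t0)^(n+1) * ∑' k, (‖α (k+(n+1))‖ *
              (t0 ^ (k+(n+1)) / (Nat.doubleFactorial (2*(k+(n+1))+1) : ℝ))) := tsum_mul_left
        _ ≤ 2 * (t/t0)^(n+1) * S := by
            apply mul_le_mul_of_nonneg_left _ (by positivity)
            exact Summable.tsum_le_tsum_of_inj (fun k => k + (n+1))
              (add_left_injective (n+1))
              (fun c _ => by positivity)
              (fun k => le_refl _) hshiftS hS
    have hlow : ‖α n‖ * (t^n / (2 * (Nat.doubleFactorial (2*n+1) : ℝ)))
        ≤ ‖α n‖ * |sphBessel n t| := by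
      apply mul_le_mul_of_nonneg_left _ (norm_nonneg _)
      have hge := sphBessel_ge n htp.le ht1
      have hjpos : 0 ≤ sphBessel n t := le_trans (by positivity) hge
      rw [abs_of_nonneg hjpos]
      exact hge
    linarith
  -- conclude α n = 0 by letting t → 0
  by_contra hne
  have hεpos : 0 < ‖α n‖ := norm_pos_iff.mpr hne
  set c : ℝ := 4 * (Nat.doubleFactorial (2*n+1) : ℝ) * S / t0^(n+1) with hcdef
  have hcnn : 0 ≤ c := by positivity
  have hbound : ∀ t, 0 < t → t < t0 → ‖α n‖ ≤ c * t := by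
    intro t htp htt0
    have hk := key t htp htt0
    have htn : (0:ℝ) < t^n := pow_pos htp n
    have e1 : 2 * (t/t0)^(n+1) * S = (c * t) * t^n / (2 * (Nat.doubleFactorial (2*n+1) : ℝ)) := by
      rw [hcdef, div_pow, pow_succ]
      field_simp
      ring
    rw [e1] at hk
    have e2 : ‖α n‖ * (t^n / (2 * (Nat.doubleFactorial (2*n+1) : ℝ)))
        = ‖α n‖ * t^n / (2 * (Nat.doubleFactorial (2*n+1) : ℝ)) := by ring
    rw [e2] at hk
    have hk2 : ‖α n‖ * t^n ≤ (c * t) * t^n :=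
      (div_le_div_iff_of_pos_right (c := 2 * (Nat.doubleFactorial (2*n+1) : ℝ)) (by positivity)).mp hk
    exact le_of_mul_le_mul_right hk2 htn
  set t : ℝ := min (t0/2) (‖α n‖/(2*(c+1))) with htdef
  have htp : 0 < t := lt_min (by linarith) (by positivity)
  have htt0 : t < t0 := lt_of_le_of_lt (min_le_left _ _) (by linarith)
  have h1 := hbound t htp htt0
  have h2 : t ≤ ‖α n‖/(2*(c+1)) := min_le_right _ _
  have h3 : c * t ≤ c * (‖α n‖/(2*(c+1))) := mul_le_mul_of_nonneg_left h2 hcnn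
  have h4 : c * (‖α n‖/(2*(c+1))) < ‖α n‖ := by
    rw [mul_div_assoc', div_lt_iff₀ (by positivity)]
    nlinarith
  linarith
end

section
/- Fix a positive integer n, real k > 0, nonzero complex numbers η₁, η₂, and φ₀ = απ with α ∈ (0,2), α ≠ 1. Let c_n^0, c_n^1 be the (nonzero) normalization constants c_n^m = √(((2n+1)/(4π))·((n-|m|)!/(n+|m|)!)). Then the 3×3 matrix A_n with entries a₁₁ = i·k·n(n+1)²c_n^1 sin²φ₀ / (2(2n+1)√(n(n+1))), a₁₂ = -k·n(n+1)²c_n^1 sinφ₀ cosφ₀ / (2(2n+1)√(n(n+1))), a₁₃ = (-η₂cosφ₀ - η₁)·√(n(n+1))·c_n^0/(2n+1), a₂₁ = -i·k·n(n+1)²c_n^1 sinφ₀ cosφ₀ / (2(2n+1)√(n(n+1))), a₂₂ = -k·n(n+1)²c_n^1 sin²φ₀ / (2(2n+1)√(n(n+1))), a₂₃ = -η₂·√(n(n+1))·c_n^0 sinφ₀/(2n+1), a₃₁ = i·k·n(n+1)²c_n^1 / (2(2n+1)√(n(n+1))), a₃₂ = 0, a₃₃ = η₁·√(n(n+1))·c_n^0/(2n+1),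 has determinant det A_n = -i·k²·η₁·((n+1)/(2n+1))³·(n√(n(n+1))/2)·(c_n^1)²·c_n^0·sin²(απ). -/
open Real Complex Matrix

/-- Determinant of the matrix `A_n` arising from the impedance conditions at an edge-corner
of opening angle `φ₀ = απ`:
`det A_n = -i k² η₁ ((n+1)/(2n+1))³ (n √(n(n+1))/2) (c_n^1)² c_n^0 sin²(απ)`. -/
theorem det_An (n : ℕ) (hn : 1 ≤ n) (k : ℝ) (hk : 0 < k) (η₁ η₂ : ℂ)
    (hη₁ : η₁ ≠ 0) (hη₂ : η₂ ≠ 0)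
    (α : ℝ) (hα : α ∈ Set.Ioo (0 : ℝ) 2) (hα1 : α ≠ 1)
    (φ₀ : ℝ) (hφ₀ : φ₀ = α * π)
    (s : ℝ) (hs : s = Real.sqrt (n * (n + 1)))
    (c0 : ℝ) (hc0 : c0 = Real.sqrt ((2 * n + 1) / (4 * π)))
    (c1 : ℝ) (hc1 : c1 = Real.sqrt ((2 * n + 1) / (4 * π) *
      ((Nat.factorial (n - 1) : ℝ) / (Nat.factorial (n + 1))))) :
    (!![Complex.I * k * n * ((n : ℂ) + 1) ^ 2 * c1 * (Real.sin φ₀ : ℂ) ^ 2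
          / (2 * (2 * (n : ℂ) + 1) * s),
        -(k : ℂ) * n * ((n : ℂ) + 1) ^ 2 * c1 * (Real.sin φ₀ : ℂ) * (Real.cos φ₀ : ℂ)
          / (2 * (2 * (n : ℂ) + 1) * s),
        (-η₂ * (Real.cos φ₀ : ℂ) - η₁) * (s : ℂ) * c0 / (2 * (n : ℂ) + 1);
        -Complex.I * k * n * ((n : ℂ) + 1) ^ 2 * c1 * (Real.sin φ₀ : ℂ) * (Real.cos φ₀ : ℂ)
          / (2 * (2 * (n : ℂ) + 1) * s),
        -(k : ℂ) * n * ((n : ℂ) + 1) ^ 2 * c1 * (Real.sin φ₀ : ℂ) ^ 2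
          / (2 * (2 * (n : ℂ) + 1) * s),
        -η₂ * (s : ℂ) * c0 * (Real.sin φ₀ : ℂ) / (2 * (n : ℂ) + 1);
        Complex.I * k * n * ((n : ℂ) + 1) ^ 2 * c1 / (2 * (2 * (n : ℂ) + 1) * s),
        0,
        η₁ * (s : ℂ) * c0 / (2 * (n : ℂ) + 1)]).det
      = -Complex.I * (k : ℂ) ^ 2 * η₁ * (((n : ℂ) + 1) / (2 * (n : ℂ) + 1)) ^ 3
          * ((n : ℂ) * s / 2) * (c1 : ℂ) ^ 2 * (c0 : ℂ) * (Real.sin (α * π) : ℂ) ^ 2 := by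
  subst hφ₀
  have hs2 : (s : ℂ) ^ 2 = (n : ℂ) * ((n : ℂ) + 1) := by
    have : s ^ 2 = (n : ℝ) * (n + 1) := by
      rw [hs, Real.sq_sqrt] ; positivity
    calc (s : ℂ) ^ 2 = ((s ^ 2 : ℝ) : ℂ) := by push_cast; ring
      _ = (n : ℂ) * ((n : ℂ) + 1) := by rw [this]; push_cast; ring
  have hsne : (s : ℂ) ≠ 0 := by
    have : (0:ℝ) < s := by
      rw [hs]; positivity
    exact_mod_cast ne_of_gt this
  have hd : (2 * (n : ℂ) + 1) ≠ 0 := by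
    have : ((2 * n + 1 : ℕ) : ℂ) ≠ 0 := Nat.cast_ne_zero.mpr (by omega)
    push_cast at this; exact this
  have hsc : ((Real.sin (α * π) : ℂ)) ^ 2 + ((Real.cos (α * π) : ℂ)) ^ 2 = 1 := by
    have := Real.sin_sq_add_cos_sq (α * π)
    exact_mod_cast congrArg (fun x : ℝ => (x : ℂ)) this
  rw [Matrix.det_fin_three]
  simp only [Matrix.of_apply, Matrix.cons_val', Matrix.cons_val_zero, Matrix.cons_val_one,
    Matrix.head_cons, Matrix.empty_val', Matrix.cons_val_fin_one, Matrix.head_fin_const,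
    Matrix.cons_val_two, Matrix.tail_cons]
  push_cast
  push_cast at hsc
  have hsplit : ∀ X : ℂ, X / (2 * (2 * (n:ℂ) + 1) * (s:ℂ))
      = X * (2 * (n:ℂ) + 1)⁻¹ * ((s:ℂ))⁻¹ / 2 := by
    intro X
    rw [div_eq_mul_inv, mul_inv, mul_inv, div_eq_mul_inv]
    ring
  simp only [hsplit]
  have hinv : (s : ℂ) * ((s : ℂ))⁻¹ = 1 := mul_inv_cancel₀ hsne
  linear_combination
    (-η₁ * Complex.I * ((k:ℂ) * (n:ℂ) * ((n:ℂ)+1)^2 * (c1:ℂ) / 2)^2 * (s:ℂ) * (c0:ℂ)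
        * ((2*(n:ℂ)+1)⁻¹)^3 * (((s:ℂ))⁻¹)^2 * (Complex.sin ((α:ℂ)*(π:ℂ)))^2) * hsc
    + (Complex.I * (k:ℂ)^2 * (c1:ℂ)^2 * η₁ * (c0:ℂ) * ((2*(n:ℂ)+1)⁻¹)^3
        * (Complex.sin ((α:ℂ)*(π:ℂ)))^2 * (n:ℂ) * ((n:ℂ)+1)^3 * (s:ℂ) * (((s:ℂ))⁻¹)^2 / 2) * hs2
    + (-Complex.I * (k:ℂ)^2 * (c1:ℂ)^2 * η₁ * (c0:ℂ) * ((2*(n:ℂ)+1)⁻¹)^3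
        * (Complex.sin ((α:ℂ)*(π:ℂ)))^2 * (n:ℂ) * ((n:ℂ)+1)^3 * (s:ℂ)
        * ((s:ℂ)*((s:ℂ))⁻¹ + 1) / 2) * hinv
end

section
/- Under the same setup (n ≥ 1 a positive integer, k > 0 real, η₂ ∈ ℂ nonzero, φ₀ = απ with α ∈ (0,2)\{1}, and c_n^0, c_n^1 the nonzero spherical-harmonic normalization constants), the 3×3 matrix B_n with entries b₁₁ = -η₂ n(n+1)² c_n^1 cos²φ₀/(2(2n+1)√(n(n+1))), b₁₂ = i η₂ n(n+1)² c_n^1 sinφ₀cosφ₀/(2(2n+1)√(n(n+1))), b₁₃ = i k √(n(n+1)) c_n^0 cosφ₀/(2n+1), b₂₁ = η₂ n(n+1)² c_n^1 sinφ₀cosφ₀/(2(2n+1)√(n(n+1))), b₂₂ = i η₂ n(n+1)² c_n^1 sin²φ₀/(2(2n+1)√(n(n+1))), b₂₃ = i k √(n(n+1)) c_n^0 sinφ₀/(2n+1), b₃₁ = -n(n+1)² c_n^1 (-η₁ + η₂cosφ₀)/(2(2n+1)√(n(n+1))), b₃₂ = i η₂ n(n+1)² c_n^1 sinφ₀/(2(2n+1)√(n(n+1))),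 b₃₃ = 0, has determinant det B_n = -k·η₂²·((n+1)/(2n+1))³·(n√(n(n+1))/2)·(c_n^1)²·c_n^0·sin²φ₀·cos²φ₀. In particular, if additionally α ∉ {1/2, 3/2}, k > 0 and η₂ ≠ 0, then B_n is invertible. -/
/-!
Writing `a = n(n+1)² c_n^1 / (2(2n+1)√(n(n+1)))` and `b = k √(n(n+1)) c_n^0 / (2n+1)`, the entries
of `B_n` are monomials in `a, b, η₁, η₂, sin φ₀, cos φ₀`. Cofactor expansion along the third column
gives `det B_n = -2 η₂² a² b sin²φ₀ cos²φ₀`: the two terms containing `η₁` cancel. Substituting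
`√(n(n+1))² = n(n+1)` yields the closed form. For invertibility, `sin(απ)` and `cos(απ)` vanish on
`(0, 2)` only at `α = 1` and `α ∈ {1/2, 3/2}`, and the normalization constants are positive.
-/

open Real Complex Matrix

def impedanceMatrix {R : Type*} [CommRing R] (i a b η₁ η₂ S C : R) : Matrix (Fin 3) (Fin 3) R :=
  !![-η₂ * a * C ^ 2, i * η₂ * a * S * C, i * b * C;
     η₂ * a * S * C, i * η₂ * a * S ^ 2, i * b * S;
     -a * (-η₁ + η₂ * C), i * η₂ * a * S, 0]

theorem det_impedanceMatrix {R : Type*} [CommRing R] {i : R} (hi : i ^ 2 = -1)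
    (a b η₁ η₂ S C : R) :
    (impedanceMatrix i a b η₁ η₂ S C).det = -2 * η₂ ^ 2 * a ^ 2 * b * S ^ 2 * C ^ 2 := by
  rw [det_fin_three]
  simp only [impedanceMatrix, of_apply, cons_val', cons_val_zero, cons_val_one, cons_val_two,
    empty_val', cons_val_fin_one, head_cons, tail_cons, head_fin_const]
  linear_combination (2 * η₂ ^ 2 * a ^ 2 * b * S ^ 2 * C ^ 2) * hi

theorem Real.sin_mul_pi_ne_zero {α : ℝ} (hα : α ∈ Set.Ioo (0 : ℝ) 2) (hα1 : α ≠ 1) :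
    Real.sin (α * π) ≠ 0 := by
  refine Real.sin_ne_zero_iff.2 fun m hm => hα1 ?_
  have hmα : (m : ℝ) = α := mul_right_cancel₀ Real.pi_ne_zero hm
  have hm0 : 0 < m := by exact_mod_cast hmα ▸ hα.1
  have hm2 : m < 2 := by exact_mod_cast hmα ▸ hα.2
  rw [← hmα, show m = 1 by omega, Int.cast_one]

theorem Real.cos_mul_pi_ne_zero {α : ℝ} (hα : α ∈ Set.Ioo (0 : ℝ) 2) (hα12 : α ≠ 1 / 2)
    (hα32 : α ≠ 3 / 2) : Real.cos (α * π) ≠ 0 := by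
  refine Real.cos_ne_zero_iff.2 fun m hm => ?_
  have hmα : α = (2 * m + 1) / 2 := by
    apply mul_right_cancel₀ Real.pi_ne_zero; rw [hm]; ring
  have hm0 : -1 < m := by
    have := hα.1; rw [hmα] at this; exact_mod_cast (by linarith : (-1 : ℝ) < m)
  have hm2 : m < 2 := by
    have := hα.2; rw [hmα] at this; exact_mod_cast (by linarith : (m : ℝ) < 2)
  interval_cases m
  · exact hα12 (by rw [hmα]; norm_num)
  · exact hα32 (by rw [hmα]; norm_num)

/-- Determinant of the matrix `B_n` arising from the impedance conditions at an edge-corner: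
`det B_n = -k η₂² ((n+1)/(2n+1))³ (n √(n(n+1))/2) (c_n^1)² c_n^0 sin²φ₀ cos²φ₀`; in particular
`B_n` is invertible when additionally `α ∉ {1/2, 3/2}`. -/
theorem det_Bn (n : ℕ) (hn : 1 ≤ n) (k : ℝ) (hk : 0 < k) (η₁ η₂ : ℂ) (hη₂ : η₂ ≠ 0)
    (α : ℝ) (hα : α ∈ Set.Ioo (0 : ℝ) 2) (hα1 : α ≠ 1)
    (φ₀ : ℝ) (hφ₀ : φ₀ = α * π)
    (s : ℝ) (hs : s = Real.sqrt (n * (n + 1)))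
    (c0 : ℝ) (hc0 : c0 = Real.sqrt ((2 * n + 1) / (4 * π)))
    (c1 : ℝ) (hc1 : c1 = Real.sqrt ((2 * n + 1) / (4 * π) *
      ((Nat.factorial (n - 1) : ℝ) / (Nat.factorial (n + 1)))))
    (B : Matrix (Fin 3) (Fin 3) ℂ)
    (hB : B = !![-η₂ * n * ((n : ℂ) + 1) ^ 2 * c1 * (Real.cos φ₀ : ℂ) ^ 2
          / (2 * (2 * (n : ℂ) + 1) * s),
        Complex.I * η₂ * n * ((n : ℂ) + 1) ^ 2 * c1 * (Real.sin φ₀ : ℂ) * (Real.cos φ₀ : ℂ)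
          / (2 * (2 * (n : ℂ) + 1) * s),
        Complex.I * k * (s : ℂ) * c0 * (Real.cos φ₀ : ℂ) / (2 * (n : ℂ) + 1);
        η₂ * n * ((n : ℂ) + 1) ^ 2 * c1 * (Real.sin φ₀ : ℂ) * (Real.cos φ₀ : ℂ)
          / (2 * (2 * (n : ℂ) + 1) * s),
        Complex.I * η₂ * n * ((n : ℂ) + 1) ^ 2 * c1 * (Real.sin φ₀ : ℂ) ^ 2
          / (2 * (2 * (n : ℂ) + 1) * s),
        Complex.I * k * (s : ℂ) * c0 * (Real.sin φ₀ : ℂ) / (2 * (n : ℂ) + 1);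
        -(n : ℂ) * ((n : ℂ) + 1) ^ 2 * c1 * (-η₁ + η₂ * (Real.cos φ₀ : ℂ))
          / (2 * (2 * (n : ℂ) + 1) * s),
        Complex.I * η₂ * n * ((n : ℂ) + 1) ^ 2 * c1 * (Real.sin φ₀ : ℂ)
          / (2 * (2 * (n : ℂ) + 1) * s),
        0]) :
    B.det = -(k : ℂ) * η₂ ^ 2 * (((n : ℂ) + 1) / (2 * (n : ℂ) + 1)) ^ 3
        * ((n : ℂ) * s / 2) * (c1 : ℂ) ^ 2 * (c0 : ℂ)
        * (Real.sin φ₀ : ℂ) ^ 2 * (Real.cos φ₀ : ℂ) ^ 2 ∧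
      (α ≠ 1 / 2 → α ≠ 3 / 2 → IsUnit B) := by
  have hs_pos : 0 < s := hs ▸ Real.sqrt_pos.2 (by positivity)
  have hs_sq : (s : ℂ) ^ 2 = n * (n + 1) := by
    rw [← ofReal_pow, hs, Real.sq_sqrt (by positivity)]; push_cast; ring
  have hs0 : (s : ℂ) ≠ 0 := ofReal_ne_zero.2 hs_pos.ne'
  have h2n1 : (2 * (n : ℂ) + 1) ≠ 0 := by exact_mod_cast (by omega : 2 * n + 1 ≠ 0)
  have hB' : B = impedanceMatrix I (n * (n + 1) ^ 2 * c1 / (2 * (2 * n + 1) * s))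
      (k * s * c0 / (2 * n + 1)) η₁ η₂ (Real.sin φ₀) (Real.cos φ₀) := by
    rw [hB, impedanceMatrix]
    congr 1
    ext i j
    fin_cases i <;> fin_cases j <;> simp <;> ring
  have hdet : B.det = -(k : ℂ) * η₂ ^ 2 * (((n : ℂ) + 1) / (2 * (n : ℂ) + 1)) ^ 3
        * ((n : ℂ) * s / 2) * (c1 : ℂ) ^ 2 * (c0 : ℂ)
        * (Real.sin φ₀ : ℂ) ^ 2 * (Real.cos φ₀ : ℂ) ^ 2 := by
    rw [hB', det_impedanceMatrix I_sq]
    field_simp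
    linear_combination
      (n * c1 ^ 2 * k * c0 * (Real.sin φ₀ : ℂ) ^ 2 * (Real.cos φ₀ : ℂ) ^ 2 : ℂ) * hs_sq
  refine ⟨hdet, fun hα12 hα32 => ?_⟩
  have hc0_ne : c0 ≠ 0 := hc0 ▸ (Real.sqrt_pos.2 (by positivity)).ne'
  have hc1_ne : c1 ≠ 0 := hc1 ▸ (Real.sqrt_pos.2 (by positivity)).ne'
  have hsin : Real.sin φ₀ ≠ 0 := hφ₀ ▸ Real.sin_mul_pi_ne_zero hα hα1
  have hcos : Real.cos φ₀ ≠ 0 := hφ₀ ▸ Real.cos_mul_pi_ne_zero hα hα12 hα32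
  rw [isUnit_iff_isUnit_det, hdet, isUnit_iff_ne_zero]
  simp [-ofReal_sin, -ofReal_cos, Nat.one_le_iff_ne_zero.1 hn, Nat.cast_add_one_ne_zero, hk.ne',
    hη₂, hs0, hc0_ne, hc1_ne, hsin, hcos, h2n1]
end
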